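/- arXiv:2410.15328 — 5 statements merged into one kernel-verified Lean document; each statement's English description precedes it below -/
import Mathlib

section
/- For a finite set A = {a_0, a_1, ..., a_{n-1}} with n ≥ 3 elements, the set of atoms {at(a_{i-1}, a_i) : i ∈ {1, ..., n-1}} ∪ {at(a_{n-1}, a_0)} generates the lattice Equ(A) of all equivalence relations on A. -/
/-- `atEq p q` is the smallest equivalence relation collapsing `p` and `q`
(an atom of the equivalence lattice when `p ≠ q`). -/
def atEq {A : Type*} (p q : A) : Setoid A :=
  Relation.EqvGen.setoid (fun x y => x = p ∧ y = q)

/-- A subset of a lattice that is closed under binary joins and meets,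
i.e. a sublattice (possibly empty). -/
def IsSublatticeClosed {L : Type*} [Lattice L] (S : Set L) : Prop :=
  (∀ a ∈ S, ∀ b ∈ S, a ⊔ b ∈ S) ∧ (∀ a ∈ S, ∀ b ∈ S, a ⊓ b ∈ S)

/-- `X` generates the lattice `L`: no proper sublattice of `L` contains `X`. -/
def GeneratesLattice {L : Type*} [Lattice L] (X : Set L) : Prop :=
  ∀ S : Set L, X ⊆ S → IsSublatticeClosed S → S = Set.univ

/-- The sublattice generated by `X`: the smallest subset containing `X`
closed under binary joins and meets. -/
def latticeGen {L : Type*} [Lattice L] (X : Set L) : Set L :=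
  {a | ∀ S : Set L, X ⊆ S → IsSublatticeClosed S → a ∈ S}

namespace AtomsCycleAux

variable {A : Type*}

/-- The equivalence relation collapsing a set `B` into one block. -/
def collapse (B : Set A) : Setoid A where
  r x y := x = y ∨ (x ∈ B ∧ y ∈ B)
  iseqv := by
    refine ⟨fun _ => Or.inl rfl, ?_, ?_⟩
    · rintro x y (rfl | ⟨h1, h2⟩)
      exacts [Or.inl rfl, Or.inr ⟨h2, h1⟩]
    · rintro x y z (rfl | ⟨h1, h2⟩) (rfl | ⟨h3, h4⟩)
      exacts [Or.inl rfl, Or.inr ⟨h3, h4⟩, Or.inr ⟨h1, h2⟩, Or.inr ⟨h1, h4⟩]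

theorem collapse_rel {B : Set A} {x y : A} :
    collapse B x y ↔ x = y ∨ (x ∈ B ∧ y ∈ B) := Iff.rfl

theorem atEq_eq_collapse (p q : A) : atEq p q = collapse {p, q} := by
  apply Setoid.ext
  intro x y
  constructor
  · intro h
    induction h with
    | rel x y h => exact Or.inr ⟨by simp [h.1], by simp [h.2]⟩
    | refl => exact Or.inl rfl
    | symm _ _ _ ih =>
      rcases ih with rfl | ⟨h1, h2⟩
      exacts [Or.inl rfl, Or.inr ⟨h2, h1⟩]
    | trans x y z _ _ ih1 ih2 =>
      rcases ih1 with rfl | ⟨h1, h2⟩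
      · exact ih2
      rcases ih2 with rfl | ⟨h3, h4⟩
      exacts [Or.inr ⟨h1, h2⟩, Or.inr ⟨h1, h4⟩]
  · rintro (rfl | ⟨h1, h2⟩)
    · exact Relation.EqvGen.refl _
    rcases h1 with rfl | rfl <;> rcases h2 with rfl | rfl
    · exact Relation.EqvGen.refl _
    · exact Relation.EqvGen.rel _ _ ⟨rfl, rfl⟩
    · exact Relation.EqvGen.symm _ _ (Relation.EqvGen.rel _ _ ⟨rfl, rfl⟩)
    · exact Relation.EqvGen.refl _

theorem collapse_subsingleton {B : Set A} (h : B.Subsingleton) :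
    collapse B = ⊥ := by
  apply Setoid.ext
  intro x y
  constructor
  · rintro (rfl | ⟨h1, h2⟩)
    · rfl
    · exact h h1 h2
  · rintro rfl; exact Or.inl rfl

theorem collapse_mono {B C : Set A} (h : B ⊆ C) : collapse B ≤ collapse C := by
  rw [Setoid.le_def]
  rintro x y (rfl | ⟨h1, h2⟩)
  exacts [Or.inl rfl, Or.inr ⟨h h1, h h2⟩]

theorem collapse_sup {B C : Set A} (h : (B ∩ C).Nonempty) :
    collapse B ⊔ collapse C = collapse (B ∪ C) := by
  apply le_antisymm
  · exact sup_le (collapse_mono Set.subset_union_left)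
      (collapse_mono Set.subset_union_right)
  · rw [Setoid.le_def]
    rintro x y (rfl | ⟨h1, h2⟩)
    · exact (collapse B ⊔ collapse C).refl x
    obtain ⟨z, hzB, hzC⟩ := h
    have hB : ∀ a b : A, a ∈ B → b ∈ B → (collapse B ⊔ collapse C) a b := by
      intro a b ha hb
      exact Setoid.le_def.mp le_sup_left (Or.inr ⟨ha, hb⟩)
    have hC : ∀ a b : A, a ∈ C → b ∈ C → (collapse B ⊔ collapse C) a b := by
      intro a b ha hb
      exact Setoid.le_def.mp le_sup_right (Or.inr ⟨ha, hb⟩)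
    have hx : (collapse B ⊔ collapse C) x z := by
      rcases h1 with h1 | h1
      exacts [hB x z h1 hzB, hC x z h1 hzC]
    have hy : (collapse B ⊔ collapse C) z y := by
      rcases h2 with h2 | h2
      exacts [hB z y hzB h2, hC z y hzC h2]
    exact (collapse B ⊔ collapse C).trans hx hy

theorem collapse_inf (B C : Set A) :
    collapse B ⊓ collapse C = collapse (B ∩ C) := by
  apply Setoid.ext
  intro x y
  show (collapse B x y ∧ collapse C x y) ↔ (x = y ∨ (x ∈ B ∩ C ∧ y ∈ B ∩ C))
  simp only [collapse_rel, Set.mem_inter_iff]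
  tauto

end AtomsCycleAux

open AtomsCycleAux in
/-- For a finite set `A = {a 0, …, a (n-1)}` (here enumerated by an equivalence
`e : Fin n ≃ A`) with `n ≥ 3`, the set of atoms
`{at(a_{i-1}, a_i) : 1 ≤ i ≤ n-1} ∪ {at(a_{n-1}, a_0)}` generates `Equ A`. -/
theorem atoms_on_cycle_generate {A : Type*} (n : ℕ) (hn : 3 ≤ n) (e : Fin n ≃ A) :
    GeneratesLattice
      ({s : Setoid A | ∃ i : Fin n, ∃ h : (i : ℕ) + 1 < n,
          s = atEq (e i) (e ⟨(i : ℕ) + 1, h⟩)}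
        ∪ {atEq (e ⟨n - 1, by omega⟩) (e ⟨0, by omega⟩)}) := by
  classical
  set X : Set (Setoid A) :=
    ({s : Setoid A | ∃ i : Fin n, ∃ h : (i : ℕ) + 1 < n,
          s = atEq (e i) (e ⟨(i : ℕ) + 1, h⟩)}
        ∪ {atEq (e ⟨n - 1, by omega⟩) (e ⟨0, by omega⟩)}) with hX
  -- basic facts about latticeGen
  have hsub : X ⊆ latticeGen X := fun a ha S hXS hS => hXS ha
  have hclosed_sup : ∀ a ∈ latticeGen X, ∀ b ∈ latticeGen X, a ⊔ b ∈ latticeGen X :=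
    fun a ha b hb S hXS hS => hS.1 _ (ha S hXS hS) _ (hb S hXS hS)
  have hclosed_inf : ∀ a ∈ latticeGen X, ∀ b ∈ latticeGen X, a ⊓ b ∈ latticeGen X :=
    fun a ha b hb S hXS hS => hS.2 _ (ha S hXS hS) _ (hb S hXS hS)
  -- `C S` = collapse of the image of `S`
  set C : Set (Fin n) → Setoid A := fun S => collapse (e '' S) with hC
  have hCsup : ∀ S T : Set (Fin n), (S ∩ T).Nonempty → C S ⊔ C T = C (S ∪ T) := by
    intro S T h
    rw [hC]
    simp only
    rw [Set.image_union]
    apply collapse_sup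
    rw [← Set.image_inter e.injective]
    exact h.image e
  have hCinf : ∀ S T : Set (Fin n), C S ⊓ C T = C (S ∩ T) := by
    intro S T
    rw [hC]
    simp only
    rw [Set.image_inter e.injective]
    exact collapse_inf _ _
  have hCatom : ∀ i j : Fin n, atEq (e i) (e j) = C {i, j} := by
    intro i j
    rw [hC]
    simp only
    rw [Set.image_pair]
    exact atEq_eq_collapse _ _
  have hCbot : ∀ S : Set (Fin n), S.Subsingleton → C S = ⊥ := by
    intro S hS
    exact collapse_subsingleton (hS.image e)
  -- the cycle atoms, as C of pairs
  have hatomX : ∀ a : ℕ, ∀ h : a + 1 < n,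
      C {⟨a, by omega⟩, ⟨a + 1, h⟩} ∈ latticeGen X := by
    intro a h
    apply hsub
    rw [hX]
    left
    exact ⟨⟨a, by omega⟩, h, (hCatom _ _).symm⟩
  have hwrapX : C {⟨n - 1, by omega⟩, (⟨0, by omega⟩ : Fin n)} ∈ latticeGen X := by
    apply hsub
    rw [hX]
    right
    exact (hCatom _ _).symm
  -- bottom is in the generated sublattice
  have hbot : (⊥ : Setoid A) ∈ latticeGen X := by
    have h01 := hatomX 0 (by omega)
    have h12 := hatomX 1 (by omega)
    have := hclosed_inf _ h01 _ h12
    rwa [hCinf, show ({⟨0, by omega⟩, ⟨1, by omega⟩} ∩ {⟨1, by omega⟩, ⟨2, by omega⟩} :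
        Set (Fin n)) = {⟨1, by omega⟩} by
      ext k
      simp only [Set.mem_inter_iff, Set.mem_insert_iff, Set.mem_singleton_iff, Fin.ext_iff]
      omega, hCbot _ (Set.subsingleton_singleton)] at this
  -- intervals
  have hinterval : ∀ b : ℕ, b < n → ∀ a : ℕ, a ≤ b →
      C {k : Fin n | a ≤ (k : ℕ) ∧ (k : ℕ) ≤ b} ∈ latticeGen X := by
    intro b
    induction b with
    | zero =>
      intro hb a ha
      rw [show ({k : Fin n | a ≤ (k : ℕ) ∧ (k : ℕ) ≤ 0} : Set (Fin n)) =
          {⟨0, by omega⟩} by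
        ext k; simp [Fin.ext_iff]; omega]
      rw [hCbot _ Set.subsingleton_singleton]
      exact hbot
    | succ b ih =>
      intro hb a ha
      rcases Nat.eq_or_lt_of_le ha with hab | ha'
      · rw [show ({k : Fin n | a ≤ (k : ℕ) ∧ (k : ℕ) ≤ b + 1} : Set (Fin n)) =
            {⟨b + 1, hb⟩} by
          ext k; simp [Fin.ext_iff]; omega]
        rw [hCbot _ Set.subsingleton_singleton]
        exact hbot
      · have ha2 : a ≤ b := by omega
        have h1 := ih (by omega) a ha2
        have h2 := hatomX b hb
        have := hclosed_sup _ h1 _ h2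
        rwa [hCsup _ _ ⟨⟨b, by omega⟩, by
            constructor
            · simp only [Set.mem_setOf_eq]; omega
            · simp⟩,
          show ({k : Fin n | a ≤ (k : ℕ) ∧ (k : ℕ) ≤ b} ∪
              {⟨b, by omega⟩, ⟨b + 1, hb⟩} : Set (Fin n)) =
            {k : Fin n | a ≤ (k : ℕ) ∧ (k : ℕ) ≤ b + 1} by
          ext k
          simp only [Set.mem_union, Set.mem_setOf_eq, Set.mem_insert_iff,
            Set.mem_singleton_iff, Fin.ext_iff]
          omega] at this
  -- wrap-around arcs
  have harc : ∀ i j : ℕ, i < j → j < n →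
      C {k : Fin n | j ≤ (k : ℕ) ∨ (k : ℕ) ≤ i} ∈ latticeGen X := by
    intro i j hij hj
    have h1 : C {k : Fin n | j ≤ (k : ℕ) ∧ (k : ℕ) ≤ n - 1} ∈ latticeGen X := by
      rcases Nat.eq_or_lt_of_le (by omega : j ≤ n - 1) with hj' | hj'
      · rw [show ({k : Fin n | j ≤ (k : ℕ) ∧ (k : ℕ) ≤ n - 1} : Set (Fin n)) =
            {⟨j, hj⟩} by
          ext k; simp [Fin.ext_iff]; omega]
        rw [hCbot _ Set.subsingleton_singleton]
        exact hbot
      · exact hinterval (n - 1) (by omega) j (by omega)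
    have h2 : C {k : Fin n | (k : ℕ) ≤ i} ∈ latticeGen X := by
      have := hinterval i (by omega) 0 (by omega)
      rwa [show ({k : Fin n | 0 ≤ (k : ℕ) ∧ (k : ℕ) ≤ i} : Set (Fin n)) =
          {k : Fin n | (k : ℕ) ≤ i} by
        ext k; simp] at this
    have h3 := hclosed_sup _ h1 _ hwrapX
    rw [hCsup _ _ ⟨⟨n - 1, by omega⟩, by
        constructor
        · simp only [Set.mem_setOf_eq]; omega
        · simp⟩] at h3
    have h4 := hclosed_sup _ h3 _ h2
    have hwit : (({k : Fin n | j ≤ (k : ℕ) ∧ (k : ℕ) ≤ n - 1} ∪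
        {⟨n - 1, by omega⟩, ⟨0, by omega⟩}) ∩ {k : Fin n | (k : ℕ) ≤ i}).Nonempty := by
      refine ⟨⟨0, by omega⟩, ?_, ?_⟩
      · right
        right
        rfl
      · simp only [Set.mem_setOf_eq]; omega
    rw [hCsup _ _ hwit] at h4
    rwa [show ({k : Fin n | j ≤ (k : ℕ) ∧ (k : ℕ) ≤ n - 1} ∪
          {⟨n - 1, by omega⟩, ⟨0, by omega⟩} ∪ {k : Fin n | (k : ℕ) ≤ i} : Set (Fin n)) =
        {k : Fin n | j ≤ (k : ℕ) ∨ (k : ℕ) ≤ i} by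
      ext k
      have := k.isLt
      simp only [Set.mem_union, Set.mem_setOf_eq, Set.mem_insert_iff,
        Set.mem_singleton_iff, Fin.ext_iff]
      omega] at h4
  -- all atoms are in the generated sublattice
  have hatom : ∀ i j : Fin n, atEq (e i) (e j) ∈ latticeGen X := by
    have key : ∀ i j : Fin n, (i : ℕ) < (j : ℕ) →
        atEq (e i) (e j) ∈ latticeGen X := by
      intro i j hij
      have h1 := hinterval j j.isLt i (le_of_lt hij)
      have h2 := harc i j hij j.isLt
      have h3 := hclosed_inf _ h1 _ h2
      rwa [hCinf, show ({k : Fin n | (i : ℕ) ≤ (k : ℕ) ∧ (k : ℕ) ≤ (j : ℕ)} ∩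
            {k : Fin n | (j : ℕ) ≤ (k : ℕ) ∨ (k : ℕ) ≤ (i : ℕ)} : Set (Fin n)) =
          {i, j} by
        ext k
        simp only [Set.mem_inter_iff, Set.mem_setOf_eq, Set.mem_insert_iff,
          Set.mem_singleton_iff, Fin.ext_iff]
        omega, ← hCatom] at h3
    intro i j
    rcases lt_trichotomy (i : ℕ) (j : ℕ) with h | h | h
    · exact key i j h
    · have : i = j := Fin.ext h
      subst this
      rw [hCatom, hCbot _ (by simp [Set.subsingleton_singleton] : ({i, i} : Set (Fin n)).Subsingleton)]
      exact hbot
    · have : atEq (e i) (e j) = atEq (e j) (e i) := by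
        rw [atEq_eq_collapse, atEq_eq_collapse, Set.pair_comm]
      rw [this]
      exact key j i h
  -- every setoid is a finite sup of atoms
  have hall : ∀ s : Setoid A, s ∈ latticeGen X := by
    intro s
    set f : Fin n × Fin n → Setoid A :=
      fun p => if s (e p.1) (e p.2) then atEq (e p.1) (e p.2) else ⊥ with hf
    have hs_eq : s = (Finset.univ : Finset (Fin n × Fin n)).sup f := by
      apply le_antisymm
      · rw [Setoid.le_def]
        intro x y hxy
        have hx : e (e.symm x) = x := e.apply_symm_apply x
        have hy : e (e.symm y) = y := e.apply_symm_apply y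
        have hmem : f (e.symm x, e.symm y) ≤ Finset.univ.sup f :=
          Finset.le_sup (Finset.mem_univ _)
        have hfxy : f (e.symm x, e.symm y) = atEq x y := by
          rw [hf]; simp only [hx, hy]
          rw [if_pos hxy]
        rw [hfxy] at hmem
        exact Setoid.le_def.mp hmem (Relation.EqvGen.rel _ _ ⟨rfl, rfl⟩)
      · apply Finset.sup_le
        intro p _
        rw [hf]
        by_cases hp : s (e p.1) (e p.2)
        · simp only [if_pos hp]
          apply Setoid.eqvGen_le
          rintro x y ⟨rfl, rfl⟩
          exact hp
        · simp only [if_neg hp]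
          exact bot_le
    rw [hs_eq]
    apply Finset.sup_induction
    · exact hbot
    · intro a ha b hb
      exact hclosed_sup _ ha _ hb
    · intro p _
      rw [hf]
      by_cases hp : s (e p.1) (e p.2)
      · simp only [if_pos hp]
        exact hatom _ _
      · simp only [if_neg hp]
        exact hbot
  -- conclude
  intro S hXS hS
  ext s
  simp only [Set.mem_univ, iff_true]
  exact hall s S hXS hS
end

section
/- Let A be a set with at least three elements and let S be a complete sublattice of the lattice Quo(A) of quasiorders of A such that Equ(A) is a proper subset of S. Then S = Quo(A). -/
/-- The quasiorders (reflexive and transitive binary relations) on `A`. -/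
def Quo (A : Type*) : Type _ := {r : A → A → Prop // Reflexive r ∧ Transitive r}

instance {A : Type*} : PartialOrder (Quo A) :=
  inferInstanceAs (PartialOrder {r : A → A → Prop // Reflexive r ∧ Transitive r})

instance {A : Type*} : InfSet (Quo A) :=
  ⟨fun S => ⟨fun x y => ∀ r ∈ S, r.val x y,
    fun x r _ => r.2.1 x,
    fun _ _ _ h1 h2 r hr => r.2.2 (h1 r hr) (h2 r hr)⟩⟩

/-- `Quo A` is a complete lattice, ordered by inclusion: meets are intersections and
joins are least upper bounds (transitive closures of unions). -/
instance {A : Type*} : CompleteLattice (Quo A) :=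
  completeLatticeOfInf _ (fun s => by
    constructor
    · intro r hr
      exact fun x y h => h r hr
    · intro b hb x y hxy r hr
      exact (hb hr) x y hxy)

/-- The inverse `μ⁻¹ = {(y,x) : (x,y) ∈ μ}` of a quasiorder `μ`. -/
def Quo.inv {A : Type*} (μ : Quo A) : Quo A :=
  ⟨fun x y => μ.val y x, fun x => μ.2.1 x, fun _ _ _ h1 h2 => μ.2.2 h2 h1⟩

section KulinAux

variable {A : Type*}

lemma Quo.le_def (μ ρ : Quo A) : μ ≤ ρ ↔ ∀ x y, μ.val x y → ρ.val x y := Iff.rfl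

lemma Quo.sInf_val (T : Set (Quo A)) (x y : A) :
    (sInf T).val x y ↔ ∀ r ∈ T, r.val x y := Iff.rfl

/-- The quasiorder with a single nontrivial arrow `u → v`. -/
def qpair (u v : A) : Quo A :=
  ⟨fun s t => s = t ∨ (s = u ∧ t = v), fun _ => Or.inl rfl, by
    intro s t w h1 h2
    obtain rfl | ⟨h1a, h1b⟩ := h1 <;> obtain rfl | ⟨h2a, h2b⟩ := h2 <;> subst_vars <;> tauto⟩

/-- The equivalence with single nontrivial block `{u, v}`. -/
def epair (u v : A) : Quo A :=
  ⟨fun s t => s = t ∨ (s = u ∧ t = v) ∨ (s = v ∧ t = u), fun _ => Or.inl rfl, by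
    intro s t w h1 h2
    obtain rfl | ⟨h1a, h1b⟩ | ⟨h1a, h1b⟩ := h1 <;>
      obtain rfl | ⟨h2a, h2b⟩ | ⟨h2a, h2b⟩ := h2 <;> subst_vars <;> tauto⟩

lemma epair_symm (u v : A) : Symmetric (epair u v).val := by
  intro s t h
  rcases h with rfl | ⟨rfl, rfl⟩ | ⟨rfl, rfl⟩ <;> tauto

variable {S : Set (Quo A)}

/-- Move the head of an arrow: from `u → v` produce `u → w` for fresh `w`. -/
lemma moveR
    (hSup : ∀ T : Set (Quo A), T ⊆ S → T.Nonempty → sSup T ∈ S)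
    (hInf : ∀ T : Set (Quo A), T ⊆ S → T.Nonempty → sInf T ∈ S)
    (hE : ∀ q : Quo A, Symmetric q.val → q ∈ S)
    {p q r : A} (hpq : p ≠ q) (hrp : r ≠ p) (hrq : r ≠ q)
    (h : qpair p q ∈ S) : qpair p r ∈ S := by
  set J : Quo A := sSup {qpair p q, epair q r} with hJdef
  have hJS : J ∈ S := by
    refine hSup _ ?_ ⟨qpair p q, by simp⟩
    rintro x hx
    rcases hx with rfl | rfl
    · exact h
    · exact hE _ (epair_symm q r)
  -- J contains (p, r)
  have hJpr : J.val p r := by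
    have h1 : qpair p q ≤ J := le_sSup (by simp)
    have h2 : epair q r ≤ J := le_sSup (by simp)
    exact J.2.2 (h1 p q (Or.inr ⟨rfl, rfl⟩)) (h2 q r (Or.inr <| Or.inl ⟨rfl, rfl⟩))
  -- J does not contain (r, p)
  have hJrp : ¬ J.val r p := by
    set w : Quo A := ⟨fun s t => s = t ∨ ((s = p ∨ s = q ∨ s = r) ∧ (t = q ∨ t = r)),
      fun _ => Or.inl rfl, by
        intro s t x h1 h2
        rcases h1 with rfl | ⟨hs, ht⟩
        · exact h2
        · rcases h2 with rfl | ⟨_, hx⟩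
          · exact Or.inr ⟨hs, ht⟩
          · exact Or.inr ⟨hs, hx⟩⟩ with hwdef
    have hJw : J ≤ w := by
      apply sSup_le
      rintro x hx
      rcases hx with rfl | rfl
      · intro s t hst
        rcases hst with rfl | ⟨rfl, rfl⟩
        · exact Or.inl rfl
        · exact Or.inr ⟨Or.inl rfl, Or.inl rfl⟩
      · intro s t hst
        rcases hst with rfl | ⟨rfl, rfl⟩ | ⟨rfl, rfl⟩
        · exact Or.inl rfl
        · exact Or.inr ⟨Or.inr (Or.inl rfl), Or.inr rfl⟩
        · exact Or.inr ⟨Or.inr (Or.inr rfl), Or.inl rfl⟩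
    intro hcon
    have := hJw r p hcon
    rcases this with h' | ⟨_, h'⟩
    · exact hrp h'
    · rcases h' with h' | h'
      · exact hpq h'
      · exact hrp h'.symm
  have heq : qpair p r = sInf {J, epair p r} := by
    apply Subtype.ext
    funext s t
    apply propext
    constructor
    · rintro (rfl | ⟨rfl, rfl⟩) x hx
      · exact x.2.1 s
      · rcases hx with rfl | rfl
        · exact hJpr
        · exact Or.inr (Or.inl ⟨rfl, rfl⟩)
    · intro hst
      have h1 := hst J (Or.inl rfl)
      have h2 := hst (epair p r) (Or.inr rfl)
      rcases h2 with rfl | ⟨rfl, rfl⟩ | ⟨rfl, rfl⟩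
      · exact Or.inl rfl
      · exact Or.inr ⟨rfl, rfl⟩
      · exact absurd h1 hJrp
  rw [heq]
  refine hInf _ ?_ ⟨J, Or.inl rfl⟩
  rintro x (rfl | rfl)
  · exact hJS
  · exact hE _ (epair_symm p r)

/-- Move the tail of an arrow: from `p → q` produce `r → q` for fresh `r`. -/
lemma moveL
    (hSup : ∀ T : Set (Quo A), T ⊆ S → T.Nonempty → sSup T ∈ S)
    (hInf : ∀ T : Set (Quo A), T ⊆ S → T.Nonempty → sInf T ∈ S)
    (hE : ∀ q : Quo A, Symmetric q.val → q ∈ S)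
    {p q r : A} (hpq : p ≠ q) (hrp : r ≠ p) (hrq : r ≠ q)
    (h : qpair p q ∈ S) : qpair r q ∈ S := by
  set J : Quo A := sSup {qpair p q, epair p r} with hJdef
  have hJS : J ∈ S := by
    refine hSup _ ?_ ⟨qpair p q, by simp⟩
    rintro x hx
    rcases hx with rfl | rfl
    · exact h
    · exact hE _ (epair_symm p r)
  have hJrq : J.val r q := by
    have h1 : qpair p q ≤ J := le_sSup (by simp)
    have h2 : epair p r ≤ J := le_sSup (by simp)
    exact J.2.2 (h2 r p (Or.inr <| Or.inr ⟨rfl, rfl⟩)) (h1 p q (Or.inr ⟨rfl, rfl⟩))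
  have hJqr : ¬ J.val q r := by
    set w : Quo A := ⟨fun s t => s = t ∨ ((s = p ∨ s = r) ∧ (t = p ∨ t = q ∨ t = r)),
      fun _ => Or.inl rfl, by
        intro s t x h1 h2
        rcases h1 with rfl | ⟨hs, ht⟩
        · exact h2
        · rcases h2 with rfl | ⟨_, hx⟩
          · exact Or.inr ⟨hs, ht⟩
          · exact Or.inr ⟨hs, hx⟩⟩ with hwdef
    have hJw : J ≤ w := by
      apply sSup_le
      rintro x hx
      rcases hx with rfl | rfl
      · intro s t hst
        rcases hst with rfl | ⟨rfl, rfl⟩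
        · exact Or.inl rfl
        · exact Or.inr ⟨Or.inl rfl, Or.inr (Or.inl rfl)⟩
      · intro s t hst
        rcases hst with rfl | ⟨rfl, rfl⟩ | ⟨rfl, rfl⟩
        · exact Or.inl rfl
        · exact Or.inr ⟨Or.inl rfl, Or.inr (Or.inr rfl)⟩
        · exact Or.inr ⟨Or.inr rfl, Or.inl rfl⟩
    intro hcon
    have := hJw q r hcon
    rcases this with h' | ⟨h', _⟩
    · exact hrq h'.symm
    · rcases h' with h' | h'
      · exact hpq h'.symm
      · exact hrq h'.symm
  have heq : qpair r q = sInf {J, epair r q} := by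
    apply Subtype.ext
    funext s t
    apply propext
    constructor
    · rintro (rfl | ⟨rfl, rfl⟩) x hx
      · exact x.2.1 s
      · rcases hx with rfl | rfl
        · exact hJrq
        · exact Or.inr (Or.inl ⟨rfl, rfl⟩)
    · intro hst
      have h1 := hst J (Or.inl rfl)
      have h2 := hst (epair r q) (Or.inr rfl)
      rcases h2 with rfl | ⟨rfl, rfl⟩ | ⟨rfl, rfl⟩
      · exact Or.inl rfl
      · exact Or.inr ⟨rfl, rfl⟩
      · exact absurd h1 hJqr
  rw [heq]
  refine hInf _ ?_ ⟨J, Or.inl rfl⟩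
  rintro x (rfl | rfl)
  · exact hJS
  · exact hE _ (epair_symm r q)

end KulinAux

/-- Kulin's Lemma: if `A` has at least three elements and `S` is a complete
sublattice of `Quo A` properly containing the set of equivalences
(the symmetric quasiorders), then `S = Quo A`. -/
theorem kulin_lemma {A : Type*} (a b c : A) (hab : a ≠ b) (hac : a ≠ c) (hbc : b ≠ c)
    (S : Set (Quo A)) (hne : S.Nonempty)
    (hSup : ∀ T : Set (Quo A), T ⊆ S → T.Nonempty → sSup T ∈ S)
    (hInf : ∀ T : Set (Quo A), T ⊆ S → T.Nonempty → sInf T ∈ S)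
    (hEqu : {q : Quo A | Symmetric q.val} ⊂ S) :
    S = Set.univ := by
  have hE : ∀ q : Quo A, Symmetric q.val → q ∈ S := fun q hq => hEqu.1 hq
  -- get a non-symmetric member μ of S
  obtain ⟨μ, hμS, hμ⟩ := Set.exists_of_ssubset hEqu
  simp only [Set.mem_setOf_eq, Symmetric, not_forall] at hμ
  obtain ⟨u, v, huv, hvu⟩ := hμ
  have hune : u ≠ v := by rintro rfl; exact hvu (μ.2.1 u)
  -- the single arrow u → v is in S
  have hbase : qpair u v ∈ S := by
    have heq : qpair u v = sInf {μ, epair u v} := by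
      apply Subtype.ext
      funext s t
      apply propext
      constructor
      · rintro (rfl | ⟨rfl, rfl⟩) x hx
        · exact x.2.1 s
        · rcases hx with rfl | rfl
          · exact huv
          · exact Or.inr (Or.inl ⟨rfl, rfl⟩)
      · intro hst
        have h1 := hst μ (Or.inl rfl)
        have h2 := hst (epair u v) (Or.inr rfl)
        rcases h2 with rfl | ⟨rfl, rfl⟩ | ⟨rfl, rfl⟩
        · exact Or.inl rfl
        · exact Or.inr ⟨rfl, rfl⟩
        · exact absurd h1 hvu
    rw [heq]
    refine hInf _ ?_ ⟨μ, Or.inl rfl⟩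
    rintro x (rfl | rfl)
    · exact hμS
    · exact hE _ (epair_symm u v)
  -- there is always a third element
  have third : ∀ s t : A, ∃ w : A, w ≠ s ∧ w ≠ t := by
    intro s t
    by_cases h1 : a ≠ s ∧ a ≠ t
    · exact ⟨a, h1⟩
    by_cases h2 : b ≠ s ∧ b ≠ t
    · exact ⟨b, h2⟩
    push_neg at h1 h2
    refine ⟨c, ?_, ?_⟩
    · rintro rfl
      have ha : a = t := h1 hac
      have hb : b = t := h2 hbc
      exact hab (ha.trans hb.symm)
    · rintro rfl
      have ha : a = s := by
        by_contra h
        exact hac (h1 h)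
      have hb : b = s := by
        by_contra h
        exact hbc (h2 h)
      exact hab (ha.trans hb.symm)
  -- every single arrow is in S
  have main : ∀ x y : A, x ≠ y → qpair x y ∈ S := by
    intro x y hxy
    by_cases hxu : x = u
    · subst hxu
      by_cases hyv : y = v
      · subst hyv; exact hbase
      · exact moveR hSup hInf hE hune (Ne.symm hxy) hyv hbase
    · by_cases hxv : x = v
      · subst hxv
        by_cases hyu : y = u
        · subst hyu
          obtain ⟨w, hwu, hwv⟩ := third y x
          have h1 : qpair y w ∈ S := moveR hSup hInf hE hune hwu hwv hbase
          have h2 : qpair x w ∈ S :=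
            moveL hSup hInf hE (Ne.symm hwu) hxy (Ne.symm hwv) h1
          exact moveR hSup hInf hE (Ne.symm hwv) (Ne.symm hxy) (Ne.symm hwu) h2
        · have h1 : qpair u y ∈ S := moveR hSup hInf hE hune hyu (Ne.symm hxy) hbase
          exact moveL hSup hInf hE (Ne.symm hyu) (Ne.symm hune) hxy h1
      · have h1 : qpair x v ∈ S := moveL hSup hInf hE hune hxu hxv hbase
        by_cases hyv : y = v
        · subst hyv; exact h1
        · exact moveR hSup hInf hE hxv (Ne.symm hxy) hyv h1
  -- every quasiorder is a sup of single arrows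
  ext ρ
  simp only [Set.mem_univ, iff_true]
  set T : Set (Quo A) := {q | ∃ x y, ρ.val x y ∧ q = qpair x y} with hT
  have hTS : T ⊆ S := by
    rintro q ⟨x, y, hxy, rfl⟩
    by_cases h : x = y
    · subst h
      refine hE _ ?_
      rintro s t (rfl | ⟨rfl, rfl⟩)
      · exact Or.inl rfl
      · exact Or.inl rfl
    · exact main x y h
  have hTne : T.Nonempty := ⟨qpair a a, a, a, ρ.2.1 a, rfl⟩
  have hρ : ρ = sSup T := by
    apply le_antisymm
    · intro x y hxy
      have hmem : qpair x y ∈ T := ⟨x, y, hxy, rfl⟩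
      exact (le_sSup hmem) x y (Or.inr ⟨rfl, rfl⟩)
    · apply sSup_le
      rintro q ⟨x, y, hxy, rfl⟩
      rintro s t (rfl | ⟨rfl, rfl⟩)
      · exact ρ.2.1 s
      · exact hxy
  rw [hρ]
  exact hSup T hTS hTne
end

section
/- Let A = {1,...,9} with α = (158|2|3|47|69), β = (1|23|4|56|78|9), γ = (135|268|4|79), δ = (16|257|3489), u = 1, v = 4. Then the pairs (α, δ), (β, γ ∨ at(1,4)), and (β ∨ at(1,4), γ) are complementary in Equ(A). -/
section helpers

lemma atEq_le {A : Type*} {p q : A} {s : Setoid A} (h : s p q) : atEq p q ≤ s :=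
  Setoid.eqvGen_le (fun x y ⟨hx, hy⟩ => hx ▸ hy ▸ h)

lemma atEq_rel {A : Type*} (p q : A) : atEq p q p q :=
  Relation.EqvGen.rel _ _ ⟨rfl, rfl⟩

lemma sup_eq_top_of_rel_zero {n : ℕ} (s : Setoid (Fin (n+1)))
    (h : ∀ x, s x 0) : s = ⊤ := by
  refine top_unique (Setoid.le_def.mpr ?_)
  intro x y _
  exact s.trans (h x) (s.symm (h y))

lemma meet_bot_of {A : Type*} {s t : Setoid A}
    (h : ∀ x y, s x y → t x y → x = y) : s ⊓ t = ⊥ := by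
  refine bot_unique (Setoid.le_def.mpr ?_)
  intro x y hxy
  have h2 := Setoid.inf_iff_and.mp hxy
  exact h x y h2.1 h2.2

end helpers

/- `A = {1,…,9}` is modelled by `Fin 9`, where index `k : Fin 9` represents the
element `k+1`.  Equivalences are given by their partitions via `Setoid.ker` of a
block-labelling function. -/

/-- α = (158|2|3|47|69) -/
def nineα : Setoid (Fin 9) := Setoid.ker ![0, 1, 2, 3, 0, 4, 3, 0, 4]

/-- β = (1|23|4|56|78|9) -/
def nineβ : Setoid (Fin 9) := Setoid.ker ![0, 1, 1, 2, 3, 3, 4, 4, 5]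

/-- γ = (135|268|4|79) -/
def nineγ : Setoid (Fin 9) := Setoid.ker ![0, 1, 0, 2, 0, 1, 3, 1, 3]

/-- δ = (16|257|3489) -/
def nineδ : Setoid (Fin 9) := Setoid.ker ![0, 1, 2, 2, 1, 0, 1, 2, 2]

/-- With `u = 1` and `v = 4` (indices `0` and `3`), the pairs `(α, δ)`,
`(β, γ ⊔ at(1,4))` and `(β ⊔ at(1,4), γ)` are complementary in `Equ {1,…,9}`. -/
theorem nine_complementary_pairs :
    (nineα ⊔ nineδ = ⊤ ∧ nineα ⊓ nineδ = ⊥) ∧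
    (nineβ ⊔ (nineγ ⊔ atEq (0 : Fin 9) 3) = ⊤ ∧ nineβ ⊓ (nineγ ⊔ atEq (0 : Fin 9) 3) = ⊥) ∧
    ((nineβ ⊔ atEq (0 : Fin 9) 3) ⊔ nineγ = ⊤ ∧ (nineβ ⊔ atEq (0 : Fin 9) 3) ⊓ nineγ = ⊥) := by
  -- helper relation facts
  have hαδ : nineα ⊔ nineδ = ⊤ := by
    set J := nineα ⊔ nineδ with hJ
    have ha : ∀ x y : Fin 9, nineα x y → J x y := fun x y h => Setoid.le_def.mp le_sup_left h
    have hd : ∀ x y : Fin 9, nineδ x y → J x y := fun x y h => Setoid.le_def.mp le_sup_right h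
    apply sup_eq_top_of_rel_zero
    intro x
    fin_cases x
    · exact J.refl 0
    · exact J.trans (hd 1 4 rfl) (ha 4 0 rfl)
    · exact J.trans (hd 2 7 rfl) (ha 7 0 rfl)
    · exact J.trans (hd 3 7 rfl) (ha 7 0 rfl)
    · exact ha 4 0 rfl
    · exact hd 5 0 rfl
    · exact J.trans (hd 6 4 rfl) (ha 4 0 rfl)
    · exact ha 7 0 rfl
    · exact J.trans (hd 8 7 rfl) (ha 7 0 rfl)
  have hαδ' : nineα ⊓ nineδ = ⊥ := by
    apply meet_bot_of
    exact fun x y hs ht =>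
      (by decide : ∀ x y : Fin 9, (![0, 1, 2, 3, 0, 4, 3, 0, 4] : Fin 9 → ℕ) x = ![0, 1, 2, 3, 0, 4, 3, 0, 4] y →
        (![0, 1, 2, 2, 1, 0, 1, 2, 2] : Fin 9 → ℕ) x = ![0, 1, 2, 2, 1, 0, 1, 2, 2] y → x = y) x y hs ht
  have hβγ_top : ∀ J : Setoid (Fin 9), nineβ ≤ J → nineγ ≤ J → atEq (0 : Fin 9) 3 ≤ J →
      J = ⊤ := by
    intro J hb hc ht
    have hb : ∀ x y : Fin 9, nineβ x y → J x y := fun x y h => Setoid.le_def.mp hb h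
    have hc : ∀ x y : Fin 9, nineγ x y → J x y := fun x y h => Setoid.le_def.mp hc h
    have ha : J 0 3 := Setoid.le_def.mp ht (atEq_rel 0 3)
    apply sup_eq_top_of_rel_zero
    intro x
    fin_cases x
    · exact J.refl 0
    · exact J.trans (hb 1 2 rfl) (hc 2 0 rfl)
    · exact hc 2 0 rfl
    · exact J.symm ha
    · exact hc 4 0 rfl
    · exact J.trans (hb 5 4 rfl) (hc 4 0 rfl)
    · exact J.trans (hb 6 7 rfl) (J.trans (hc 7 1 rfl) (J.trans (hb 1 2 rfl) (hc 2 0 rfl)))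
    · exact J.trans (hc 7 1 rfl) (J.trans (hb 1 2 rfl) (hc 2 0 rfl))
    · exact J.trans (hc 8 6 rfl) (J.trans (hb 6 7 rfl) (J.trans (hc 7 1 rfl) (J.trans (hb 1 2 rfl) (hc 2 0 rfl))))
  -- γ ⊔ at ≤ gAt
  have hγat : nineγ ⊔ atEq (0 : Fin 9) 3 ≤ Setoid.ker ![0, 1, 0, 0, 0, 1, 2, 1, 2] := by
    refine sup_le (Setoid.le_def.mpr ?_) (atEq_le rfl)
    intro x y h
    exact (by decide : ∀ x y : Fin 9, (![0, 1, 0, 2, 0, 1, 3, 1, 3] : Fin 9 → ℕ) x = ![0, 1, 0, 2, 0, 1, 3, 1, 3] y →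
      (![0, 1, 0, 0, 0, 1, 2, 1, 2] : Fin 9 → ℕ) x = ![0, 1, 0, 0, 0, 1, 2, 1, 2] y) x y h
  have hβat : nineβ ⊔ atEq (0 : Fin 9) 3 ≤ Setoid.ker ![0, 1, 1, 0, 2, 2, 3, 3, 4] := by
    refine sup_le (Setoid.le_def.mpr ?_) (atEq_le rfl)
    intro x y h
    exact (by decide : ∀ x y : Fin 9, (![0, 1, 1, 2, 3, 3, 4, 4, 5] : Fin 9 → ℕ) x = ![0, 1, 1, 2, 3, 3, 4, 4, 5] y →
      (![0, 1, 1, 0, 2, 2, 3, 3, 4] : Fin 9 → ℕ) x = ![0, 1, 1, 0, 2, 2, 3, 3, 4] y) x y h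
  refine ⟨⟨hαδ, hαδ'⟩, ⟨?_, ?_⟩, ⟨?_, ?_⟩⟩
  · exact hβγ_top _ le_sup_left (le_trans le_sup_left le_sup_right)
      (le_trans le_sup_right le_sup_right)
  · apply meet_bot_of
    intro x y hs ht
    have ht' := Setoid.le_def.mp hγat ht
    exact (by decide : ∀ x y : Fin 9, (![0, 1, 1, 2, 3, 3, 4, 4, 5] : Fin 9 → ℕ) x = ![0, 1, 1, 2, 3, 3, 4, 4, 5] y →
      (![0, 1, 0, 0, 0, 1, 2, 1, 2] : Fin 9 → ℕ) x = ![0, 1, 0, 0, 0, 1, 2, 1, 2] y → x = y) x y hs ht' 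
  · exact hβγ_top _ (le_trans le_sup_left le_sup_left) le_sup_right
      (le_trans le_sup_right le_sup_left)
  · apply meet_bot_of
    intro x y hs ht
    have hs' := Setoid.le_def.mp hβat hs
    exact (by decide : ∀ x y : Fin 9, (![0, 1, 1, 0, 2, 2, 3, 3, 4] : Fin 9 → ℕ) x = ![0, 1, 1, 0, 2, 2, 3, 3, 4] y →
      (![0, 1, 0, 2, 0, 1, 3, 1, 3] : Fin 9 → ℕ) x = ![0, 1, 0, 2, 0, 1, 3, 1, 3] y → x = y) x y hs' ht
end

section
/- Let A be a set, u, v ∈ A, and β, γ ∈ Equ(A) such that β ∧ (γ ∨ at(u,v)) and γ ∧ (β ∨ at(u,v)) are both the bottom element of Equ(A), and u ≠ v. Then the blocks u/β and v/γ are disjoint. -/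
/-- If `β ⊓ (γ ⊔ at(u,v)) = ⊥` and `γ ⊓ (β ⊔ at(u,v)) = ⊥` and `u ≠ v`, then the
blocks `u/β` and `v/γ` are disjoint. -/
theorem blocks_disjoint {A : Type*} (u v : A) (huv : u ≠ v) (β γ : Setoid A)
    (h1 : β ⊓ (γ ⊔ atEq u v) = ⊥) (h2 : γ ⊓ (β ⊔ atEq u v) = ⊥) :
    ∀ x : A, β u x → γ v x → False := by
  intro x hux hvx
  have hat : (atEq u v) u v := Relation.EqvGen.rel _ _ ⟨rfl, rfl⟩
  have hux2 : (γ ⊔ atEq u v) u x :=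
    Setoid.trans' _ ((le_sup_right : atEq u v ≤ γ ⊔ atEq u v) hat)
      ((le_sup_left : γ ≤ γ ⊔ atEq u v) hvx)
  have hmeet : (β ⊓ (γ ⊔ atEq u v)) u x := ⟨hux, hux2⟩
  rw [h1] at hmeet
  have hxu : x = u := hmeet.symm
  have hvu2 : (β ⊔ atEq u v) v u :=
    Setoid.symm' _ ((le_sup_right : atEq u v ≤ β ⊔ atEq u v) hat)
  have hmeet2 : (γ ⊓ (β ⊔ atEq u v)) v u := ⟨hxu ▸ hvx, hvu2⟩
  rw [h2] at hmeet2
  exact huv hmeet2.symm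
end

section
/- Under the hypotheses of the extension construction (eligible system (A;α,β,γ,δ;u,v), u',v' ∉ A distinct, A' = A∪{u',v'}, α',β',γ',δ' defined as peq(α)∨at(u,u'), peq(β)∨at(u,v'), peq(γ)∨at(v,v'), peq(δ)∨at(u',v')), the element κ := (β' ∨ γ') ∧ (α' ∨ (δ' ∧ (β' ∨ γ'))) of Equ(A') equals the equivalence whose blocks are A, {u'}, {v'}; i.e., κ = peq(A×A). -/
/-- `peq inj μ` is the smallest equivalence on `A'` containing the image of `μ`
under the embedding `inj : A → A'`. -/
def peq {A A' : Type*} (inj : A → A') (μ : Setoid A) : Setoid A' :=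
  Relation.EqvGen.setoid (fun x y => ∃ a b, μ a b ∧ x = inj a ∧ y = inj b)

/-- `(A; α, β, γ, δ; u, v)` is an eligible system: `A` is nonempty, `{α,β,γ,δ}`
generates `Equ A`, and the pairs `(α,δ)`, `(β, γ ⊔ at(u,v))`, `(β ⊔ at(u,v), γ)`
are complementary. -/
def Eligible {A : Type*} (α β γ δ : Setoid A) (u v : A) : Prop :=
  Nonempty A ∧ GeneratesLattice {α, β, γ, δ} ∧
  (α ⊔ δ = ⊤ ∧ α ⊓ δ = ⊥) ∧
  (β ⊔ (γ ⊔ atEq u v) = ⊤ ∧ β ⊓ (γ ⊔ atEq u v) = ⊥) ∧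
  ((β ⊔ atEq u v) ⊔ γ = ⊤ ∧ (β ⊔ atEq u v) ⊓ γ = ⊥)


section Aux

variable {A A' : Type*}

/-- The equivalence whose only nontrivial block is `S`. -/
def bset (S : Set A') : Setoid A' :=
  ⟨fun x y => x = y ∨ (x ∈ S ∧ y ∈ S),
   fun _ => Or.inl rfl,
   by rintro x y (rfl | ⟨h1, h2⟩)
      · exact Or.inl rfl
      · exact Or.inr ⟨h2, h1⟩,
   by rintro x y z (rfl | ⟨h1, h2⟩) h; · exact h
      rcases h with rfl | ⟨h3, h4⟩
      · exact Or.inr ⟨h1, h2⟩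
      · exact Or.inr ⟨h1, h4⟩⟩

/-- The pushforward of `μ` along the injection `inj`, with the diagonal added. -/
def pimg (inj : A → A') (hinj : Function.Injective inj) (μ : Setoid A) : Setoid A' :=
  ⟨fun x y => x = y ∨ ∃ a b, μ a b ∧ x = inj a ∧ y = inj b,
   fun _ => Or.inl rfl,
   by rintro x y (rfl | ⟨a, b, hab, rfl, rfl⟩)
      · exact Or.inl rfl
      · exact Or.inr ⟨b, a, μ.symm hab, rfl, rfl⟩,
   by rintro x y z (rfl | ⟨a, b, hab, rfl, rfl⟩) h
      · exact h
      rcases h with rfl | ⟨b', c, hbc, hb, rfl⟩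
      · exact Or.inr ⟨a, b, hab, rfl, rfl⟩
      · cases hinj hb
        exact Or.inr ⟨a, c, μ.trans hab hbc, rfl, rfl⟩⟩

/-- The pushforward of `μ` together with an extra block `{p, q}` outside the range. -/
def dful (inj : A → A') (hinj : Function.Injective inj) (μ : Setoid A) (p q : A')
    (hp : p ∉ Set.range inj) (hq : q ∉ Set.range inj) : Setoid A' :=
  ⟨fun x y => x = y ∨ (∃ a b, μ a b ∧ x = inj a ∧ y = inj b) ∨
      (x = p ∧ y = q) ∨ (x = q ∧ y = p),
   fun _ => Or.inl rfl,
   by rintro x y (rfl | ⟨a, b, hab, rfl, rfl⟩ | ⟨rfl, rfl⟩ | ⟨rfl, rfl⟩)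
      · exact Or.inl rfl
      · exact Or.inr (Or.inl ⟨b, a, μ.symm hab, rfl, rfl⟩)
      · exact Or.inr (Or.inr (Or.inr ⟨rfl, rfl⟩))
      · exact Or.inr (Or.inr (Or.inl ⟨rfl, rfl⟩)),
   by rintro x y z (rfl | ⟨a, b, hab, rfl, rfl⟩ | ⟨rfl, rfl⟩ | ⟨rfl, rfl⟩) h
      · exact h
      · rcases h with rfl | ⟨b', c, hbc, hb, rfl⟩ | ⟨rfl, rfl⟩ | ⟨rfl, rfl⟩
        · exact Or.inr (Or.inl ⟨a, b, hab, rfl, rfl⟩)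
        · cases hinj hb
          exact Or.inr (Or.inl ⟨a, c, μ.trans hab hbc, rfl, rfl⟩)
        · exact absurd ⟨b, rfl⟩ hp
        · exact absurd ⟨b, rfl⟩ hq
      · rcases h with rfl | ⟨b', c, hbc, hb, rfl⟩ | ⟨h1, rfl⟩ | ⟨h1, rfl⟩
        · exact Or.inr (Or.inr (Or.inl ⟨rfl, rfl⟩))
        · exact absurd ⟨b', hb.symm⟩ hq
        · exact Or.inl h1.symm
        · exact Or.inl rfl
      · rcases h with rfl | ⟨b', c, hbc, hb, rfl⟩ | ⟨h1, rfl⟩ | ⟨h1, rfl⟩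
        · exact Or.inr (Or.inr (Or.inr ⟨rfl, rfl⟩))
        · exact absurd ⟨b', hb.symm⟩ hp
        · exact Or.inl rfl
        · exact Or.inl h1.symm⟩

theorem peq_le {inj : A → A'} {μ : Setoid A} {t : Setoid A'}
    (h : ∀ a b, μ a b → t (inj a) (inj b)) : peq inj μ ≤ t :=
  Setoid.eqvGen_le (by rintro x y ⟨a, b, hab, rfl, rfl⟩; exact h a b hab)

theorem at_le {p q : A'} {t : Setoid A'} (h : t p q) : atEq p q ≤ t :=
  Setoid.eqvGen_le (by rintro x y ⟨rfl, rfl⟩; exact h)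

theorem at_self (p q : A') : atEq p q p q :=
  Relation.EqvGen.rel _ _ ⟨rfl, rfl⟩

theorem peq_pair {inj : A → A'} {μ : Setoid A} {a b : A} (h : μ a b) :
    peq inj μ (inj a) (inj b) :=
  Relation.EqvGen.rel _ _ ⟨a, b, h, rfl, rfl⟩

end Aux

/-- In the extension construction, the element
`κ = (β' ⊔ γ') ⊓ (α' ⊔ (δ' ⊓ (β' ⊔ γ')))` of `Equ A'` equals the equivalence
whose blocks are `A`, `{u'}`, `{v'}`, i.e. `κ = peq (A × A) = peq ⊤`. -/
theorem extension_kappa {A A' : Type*} (α β γ δ : Setoid A) (u v : A)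
    (helig : Eligible α β γ δ u v)
    (inj : A → A') (hinj : Function.Injective inj)
    (u' v' : A') (huv : u' ≠ v')
    (hu : u' ∉ Set.range inj) (hv : v' ∉ Set.range inj)
    (hcover : ∀ x : A', x = u' ∨ x = v' ∨ x ∈ Set.range inj)
    (α' β' γ' δ' : Setoid A')
    (hα' : α' = peq inj α ⊔ atEq (inj u) u')
    (hβ' : β' = peq inj β ⊔ atEq (inj u) v')
    (hγ' : γ' = peq inj γ ⊔ atEq (inj v) v')
    (hδ' : δ' = peq inj δ ⊔ atEq u' v') :
    (β' ⊔ γ') ⊓ (α' ⊔ (δ' ⊓ (β' ⊔ γ'))) = peq inj (⊤ : Setoid A) := by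
  obtain ⟨-, -, ⟨hαδ, -⟩, ⟨hβγ, -⟩, -⟩ := helig
  set t1 : Setoid A' := β' ⊔ γ' with ht1
  set t2 : Setoid A' := α' ⊔ (δ' ⊓ t1) with ht2
  -- basic generator facts
  have hβ'le : peq inj β ≤ β' := hβ' ▸ le_sup_left
  have hγ'le : peq inj γ ≤ γ' := hγ' ▸ le_sup_left
  have hα'le : peq inj α ≤ α' := hα' ▸ le_sup_left
  have hδ'le : peq inj δ ≤ δ' := hδ' ▸ le_sup_left
  have hβat : (atEq (inj u) v' : Setoid A') ≤ β' := hβ' ▸ le_sup_right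
  have hγat : (atEq (inj v) v' : Setoid A') ≤ γ' := hγ' ▸ le_sup_right
  have hαat : (atEq (inj u) u' : Setoid A') ≤ α' := hα' ▸ le_sup_right
  have hδat : (atEq u' v' : Setoid A') ≤ δ' := hδ' ▸ le_sup_right
  have hβ't1 : β' ≤ t1 := le_sup_left
  have hγ't1 : γ' ≤ t1 := le_sup_right
  -- every image pair is in t1
  have huv1 : t1 (inj u) (inj v) := by
    have h1 : t1 (inj u) v' := Setoid.le_def.mp (hβat.trans hβ't1) (at_self _ _)
    have h2 : t1 (inj v) v' := Setoid.le_def.mp (hγat.trans hγ't1) (at_self _ _)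
    exact t1.trans h1 (t1.symm h2)
  have himg1 : ∀ a b : A, t1 (inj a) (inj b) := by
    have htop : (⊤ : Setoid A) ≤ Setoid.comap inj t1 := by
      rw [← hβγ]
      refine sup_le ?_ (sup_le ?_ ?_)
      · exact Setoid.le_def.mpr fun h => (Setoid.comap_rel _ _ _ _).mpr
          (Setoid.le_def.mp (hβ'le.trans hβ't1) (peq_pair h))
      · exact Setoid.le_def.mpr fun h => (Setoid.comap_rel _ _ _ _).mpr
          (Setoid.le_def.mp (hγ'le.trans hγ't1) (peq_pair h))
      · exact at_le ((Setoid.comap_rel _ _ _ _).mpr huv1)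
    exact fun a b => (Setoid.comap_rel _ _ _ _).mp (Setoid.le_def.mp htop trivial)
  -- every image pair is in t2
  have himg2 : ∀ a b : A, t2 (inj a) (inj b) := by
    have htop : (⊤ : Setoid A) ≤ Setoid.comap inj t2 := by
      rw [← hαδ]
      refine sup_le ?_ ?_
      · exact Setoid.le_def.mpr fun h => (Setoid.comap_rel _ _ _ _).mpr
          (Setoid.le_def.mp (hα'le.trans le_sup_left) (peq_pair h))
      · refine Setoid.le_def.mpr fun {a b} h => (Setoid.comap_rel _ _ _ _).mpr ?_
        have hd : (δ' ⊓ t1) (inj a) (inj b) :=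
          ⟨Setoid.le_def.mp hδ'le (peq_pair h), himg1 a b⟩
        exact Setoid.le_def.mp (le_sup_right : δ' ⊓ t1 ≤ t2) hd
    exact fun a b => (Setoid.comap_rel _ _ _ _).mp (Setoid.le_def.mp htop trivial)
  -- upper-bound setoids
  set S1 : Setoid A' := bset (Set.range inj ∪ {v'}) with hS1
  set S2 : Setoid A' := bset (Set.range inj ∪ {u'}) with hS2
  set Df : Setoid A' := dful inj hinj δ u' v' hu hv with hDf
  have ht1S1 : t1 ≤ S1 := by
    refine sup_le ?_ ?_
    · rw [hβ']
      refine sup_le (peq_le fun a b _ => Or.inr ⟨Or.inl ⟨a, rfl⟩, Or.inl ⟨b, rfl⟩⟩) ?_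
      exact at_le (Or.inr ⟨Or.inl ⟨u, rfl⟩, Or.inr rfl⟩)
    · rw [hγ']
      refine sup_le (peq_le fun a b _ => Or.inr ⟨Or.inl ⟨a, rfl⟩, Or.inl ⟨b, rfl⟩⟩) ?_
      exact at_le (Or.inr ⟨Or.inl ⟨v, rfl⟩, Or.inr rfl⟩)
  have hδD : δ' ≤ Df := by
    rw [hδ']
    refine sup_le (peq_le fun a b h => Or.inr (Or.inl ⟨a, b, h, rfl, rfl⟩)) ?_
    exact at_le (Or.inr (Or.inr (Or.inl ⟨rfl, rfl⟩)))
  have ht2S2 : t2 ≤ S2 := by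
    refine sup_le ?_ ?_
    · rw [hα']
      refine sup_le (peq_le fun a b _ => Or.inr ⟨Or.inl ⟨a, rfl⟩, Or.inl ⟨b, rfl⟩⟩) ?_
      exact at_le (Or.inr ⟨Or.inl ⟨u, rfl⟩, Or.inr rfl⟩)
    · refine Setoid.le_def.mpr fun {x y} h => ?_
      have hd : Df x y := Setoid.le_def.mp hδD h.1
      have hs : S1 x y := Setoid.le_def.mp ht1S1 h.2
      rcases hd with rfl | ⟨a, b, _, rfl, rfl⟩ | ⟨rfl, rfl⟩ | ⟨rfl, rfl⟩
      · exact Or.inl rfl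
      · exact Or.inr ⟨Or.inl ⟨a, rfl⟩, Or.inl ⟨b, rfl⟩⟩
      · rcases hs with h' | ⟨h', -⟩
        · exact absurd h' huv
        · rcases h' with h' | h'
          · exact absurd h' hu
          · exact absurd h' huv
      · rcases hs with h' | ⟨-, h'⟩
        · exact absurd h'.symm huv
        · rcases h' with h' | h'
          · exact absurd h' hu
          · exact absurd h' huv
  refine le_antisymm ?_ ?_
  · -- κ ≤ peq inj ⊤
    refine Setoid.le_def.mpr fun {x y} h => ?_
    have h1 : S1 x y := Setoid.le_def.mp ht1S1 h.1
    have h2 : S2 x y := Setoid.le_def.mp ht2S2 h.2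
    rcases h1 with rfl | ⟨hx1, hy1⟩
    · exact (peq inj ⊤).refl x
    rcases h2 with rfl | ⟨hx2, hy2⟩
    · exact (peq inj ⊤).refl x
    have hx : x ∈ Set.range inj := by
      rcases hx1 with hx1 | hx1
      · exact hx1
      · rcases hx2 with hx2 | hx2
        · exact hx2
        · exact absurd (hx2.symm.trans hx1) huv
    have hy : y ∈ Set.range inj := by
      rcases hy1 with hy1 | hy1
      · exact hy1
      · rcases hy2 with hy2 | hy2
        · exact hy2
        · exact absurd (hy2.symm.trans hy1) huv
    obtain ⟨a, rfl⟩ := hx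
    obtain ⟨b, rfl⟩ := hy
    exact peq_pair trivial
  · -- peq inj ⊤ ≤ κ
    exact peq_le fun a b _ => ⟨himg1 a b, himg2 a b⟩
end
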